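/- Let R'_3 be the set obtained from the rook monoid R_3 by removing the three transposition matrices (the 3×3 permutation matrices of determinant −1). Then R'_3 is closed under matrix multiplication and under transposition, so (R'_3,·) is an inverse subsemigroup of R_3, and for every n ≥ 2 the semigroup (R'_3,·) satisfies the semigroup identity v_{n,6}^{(3)} ≈ (v_{n,6}^{(3)})². -/

import Mathlib

universe u v

/-- Evaluation of a (nonempty) word, given as a list of variables, in a magma with an
explicit binary operation; the empty word evaluates to `none`. -/
def wEval {ι S : Type*} (mul : S → S → S) (ρ : ι → S) : List ι → Option S
  | [] => none
  | a :: l => some (l.foldl (fun s i => mul s (ρ i)) (ρ a))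

/-- The word `u_{n,k,m} = x₁⋯x_{n+k}(xₙ⋯x₁·x_{n+1}⋯x_{n+k})^{2m-1}` (variables 0-indexed). -/
def uWord (n k m : ℕ) : List ℕ :=
  List.range (n + k) ++
    (List.replicate (2 * m - 1) ((List.range n).reverse ++ List.range' n k)).flatten

/-- The words `v_{n,m}^{(h)}` (`h ≥ 1`), over variables indexed by `h`-tuples from `{0,…,2n-1}`:
`v_{n,m}^{(1)} = u_{n,n,m}`, and `v_{n,m}^{(h+1)}` is obtained by substituting, for the `j`-th
variable of `v_{n,m}^{(1)}`, the copy of `v_{n,m}^{(h)}` whose variables get `j` appended. -/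
def vWord (n m : ℕ) : ℕ → List (List ℕ)
  | 0 => []
  | 1 => (uWord n n m).map (fun i => [i])
  | h + 2 => (uWord n n m).flatMap (fun j => (vWord n m (h + 1)).map (fun xs => xs ++ [j]))

/-- The rook monoid `R_t`: zero-one `t × t` matrices with at most one entry equal to `1`
in each row and in each column. -/
def RookSet (t : ℕ) : Set (Matrix (Fin t) (Fin t) ℕ) :=
  {A | (∀ i j, A i j = 0 ∨ A i j = 1) ∧
    (∀ i j k, A i j = 1 → A i k = 1 → j = k) ∧
    (∀ i j k, A i k = 1 → A j k = 1 → i = j)}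

/-- The three `3 × 3` transposition matrices. -/
def transpositions : Set (Matrix (Fin 3) (Fin 3) ℕ) :=
  {Matrix.of ![![0, 1, 0], ![1, 0, 0], ![0, 0, 1]],
   Matrix.of ![![0, 0, 1], ![0, 1, 0], ![1, 0, 0]],
   Matrix.of ![![1, 0, 0], ![0, 0, 1], ![0, 1, 0]]}

/-- `R₃'`: the rook monoid `R₃` with the three transposition matrices removed. -/
def R3' : Set (Matrix (Fin 3) (Fin 3) ℕ) := RookSet 3 \ transpositions

-- ===================== auxiliary material =====================

private abbrev M33 := Matrix (Fin 3) (Fin 3) ℕ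

private def els : List (Matrix (Fin 3) (Fin 3) ℕ) :=
  [!![0,0,0;0,0,0;0,0,0],
   !![0,0,0;0,0,0;0,0,1],
   !![0,0,0;0,0,0;0,1,0],
   !![0,0,0;0,0,0;1,0,0],
   !![0,0,0;0,0,1;0,0,0],
   !![0,0,0;0,0,1;0,1,0],
   !![0,0,0;0,0,1;1,0,0],
   !![0,0,0;0,1,0;0,0,0],
   !![0,0,0;0,1,0;0,0,1],
   !![0,0,0;0,1,0;1,0,0],
   !![0,0,0;1,0,0;0,0,0],
   !![0,0,0;1,0,0;0,0,1],
   !![0,0,0;1,0,0;0,1,0],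
   !![0,0,1;0,0,0;0,0,0],
   !![0,0,1;0,0,0;0,1,0],
   !![0,0,1;0,0,0;1,0,0],
   !![0,0,1;0,1,0;0,0,0],
   !![0,0,1;1,0,0;0,0,0],
   !![0,0,1;1,0,0;0,1,0],
   !![0,1,0;0,0,0;0,0,0],
   !![0,1,0;0,0,0;0,0,1],
   !![0,1,0;0,0,0;1,0,0],
   !![0,1,0;0,0,1;0,0,0],
   !![0,1,0;0,0,1;1,0,0],
   !![0,1,0;1,0,0;0,0,0],
   !![1,0,0;0,0,0;0,0,0],
   !![1,0,0;0,0,0;0,0,1],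
   !![1,0,0;0,0,0;0,1,0],
   !![1,0,0;0,0,1;0,0,0],
   !![1,0,0;0,1,0;0,0,0],
   !![1,0,0;0,1,0;0,0,1]]

private def mrows : List ℕ :=
  [0, 1427336166246097414247840227075673806484899872, 2945092166811470858899015592777097742952431616, 4419863821201188796027873027103356458696179712, 5709301108758265896255048968721041447169891456, 7227145582863776872857838551574312377703013504, 8701872319981059979696858632697320279376206976, 10308519481484406314130412960080084824391417856, 11735855647688965353509974566127479474763171872, 13255140322964829369787670270861232306382700544, 14732879404461331426595398145358145383083016192, 16160215570665849899917773449255863374959446048, 17677971569943574288431663273898773028090675200, 18555065267616400060067739374912183032915742112, 20072909741721911036670528957765453963448864160, 21547636478839194143509549038888461865122057632, 23154593978235428468907029633758251709228699040, 24724232568225594806270844338000277371915914656, 26242077041001877785810883456617078204504264096, 27983253868218781315427656828904127626453450752, 29410590034423340354807218434951522276825204768, 30929874709699204371084914139685275108444733440, 32265307284021857077700927980655098949952412800, 33784635515523885420772121928309168805453831296, 35348524573556528336673960528150479979628462080, 36832198513211488045749691610956670801138417664, 38259534679416006519072066914854388793014847520, 39777290678693730907585956739497298446146076672, 41114119899497532765782609417706491051262680192,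 42723776642122946378237604981849178660996644864, 44151112808285926476691701664718617496759928864]

private def tT : List ℕ := [0, 1, 4, 13, 2, 5, 14, 7, 8, 16, 19, 20, 22, 3, 6, 15, 9, 21, 23, 10, 11, 17, 12, 18, 24, 25, 26, 28, 27, 29, 30]

private def t1 : List ℕ := [0, 1, 2, 3, 4, 7, 8, 10, 13, 19, 25, 26, 29, 30]

private def t2 : List ℕ := [0, 1, 7, 8, 25, 26, 29, 30]

private def t3 : List ℕ := [0, 1, 7, 8, 25, 26, 29, 30]

private def pw0 : List ℕ := [0, 1, 2, 3, 4, 5, 6, 7, 8, 9, 10, 11, 12, 13, 14, 15, 16, 17, 18, 19, 20, 21, 22, 23, 24, 25, 26, 27, 28, 29, 30]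

private def pw1 : List ℕ := [0, 1, 2, 3, 4, 7, 8, 10, 13, 19, 25, 26, 29, 30]

private def pw2 : List ℕ := [0, 1, 7, 8, 25, 26, 29, 30]

private def rm0 : List ℕ :=
  [1065091071, 1065091071, 1065091071, 1065091071, 1065091071, 50898111, 40379615, 1065091071, 638068127, 303572639, 1065091071, 168373407, 34239647, 1065091071, 34239647, 50898111, 168373407, 34239647, 262144, 1065091071, 303572639, 40379615, 40379615, 8388608, 50898111, 1065091071, 638068127, 168373407, 303572639, 638068127, 1073741824]

private def rm1 : List ℕ :=
  [34088095, 33554563, 5, 9, 17, 0, 0, 33554563, 256, 0, 1025, 0, 0, 8193, 0, 0, 0, 0, 0, 524289, 0, 0, 0, 0, 0, 33554563, 67108864, 0, 0, 536870912, 1073741824]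

private def rm2 : List ℕ :=
  [1, 2, 0, 0, 0, 0, 0, 128, 256, 0, 0, 0, 0, 0, 0, 0, 0, 0, 0, 0, 0, 0, 0, 0, 0, 33554432, 67108864, 0, 0, 536870912, 1073741824]


private def el (i : ℕ) : M33 := els.getD i 0

private def mulT (i j : ℕ) : ℕ := (mrows.getD i 0 >>> (5 * j)) &&& 31

private def revP (m : List ℕ) (p r : ℕ) : Bool := (m.getD p 0 >>> r) &&& 1 == 1

private def valT (p r q : ℕ) : ℕ :=
  mulT (mulT p q) ((fun z => mulT z (mulT r q))^[10] (mulT r q))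

private def t0 : List ℕ := List.range 31

private lemma mulT_lt : ∀ i < 31, ∀ j < 31, mulT i j < 31 := by decide

private lemma hel : ∀ i < 31, ∀ j < 31, el i * el j = el (mulT i j) := by decide

private lemma ht0 : ∀ i ∈ t0, i < 31 := by decide
private lemma ht1 : ∀ i ∈ t1, i < 31 := by decide
private lemma ht2 : ∀ i ∈ t2, i < 31 := by decide
private lemma hpw0 : ∀ i ∈ pw0, i < 31 := by decide
private lemma hpw1 : ∀ i ∈ pw1, i < 31 := by decide
private lemma hpw2 : ∀ i ∈ pw2, i < 31 := by decide

private lemma c1_0 : ∀ a ∈ t0, ∀ b ∈ t0, revP rm0 (mulT a b) (mulT b a) = true := by decide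
private lemma c2_0 : ∀ p < 31, ∀ r < 31, revP rm0 p r = true →
    ∀ t ∈ t0, revP rm0 (mulT p t) (mulT t r) = true := by decide
private lemma c3_0 : ∀ a ∈ t0, ∀ b ∈ t0, mulT a b ∈ pw0 := by decide
private lemma c4_0 : ∀ q ∈ pw0, ∀ t ∈ t0, mulT q t ∈ pw0 := by decide
private lemma c5_0 : ∀ p < 31, ∀ r < 31, revP rm0 p r = true →
    ∀ q ∈ pw0, valT p r q ∈ t1 := by set_option maxRecDepth 10000 in decide

private lemma c1_1 : ∀ a ∈ t1, ∀ b ∈ t1, revP rm1 (mulT a b) (mulT b a) = true := by decide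
private lemma c2_1 : ∀ p < 31, ∀ r < 31, revP rm1 p r = true →
    ∀ t ∈ t1, revP rm1 (mulT p t) (mulT t r) = true := by decide
private lemma c3_1 : ∀ a ∈ t1, ∀ b ∈ t1, mulT a b ∈ pw1 := by decide
private lemma c4_1 : ∀ q ∈ pw1, ∀ t ∈ t1, mulT q t ∈ pw1 := by decide
private lemma c5_1 : ∀ p < 31, ∀ r < 31, revP rm1 p r = true →
    ∀ q ∈ pw1, valT p r q ∈ t2 := by decide

private lemma c1_2 : ∀ a ∈ t2, ∀ b ∈ t2, revP rm2 (mulT a b) (mulT b a) = true := by decide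
private lemma c2_2 : ∀ p < 31, ∀ r < 31, revP rm2 p r = true →
    ∀ t ∈ t2, revP rm2 (mulT p t) (mulT t r) = true := by decide
private lemma c3_2 : ∀ a ∈ t2, ∀ b ∈ t2, mulT a b ∈ pw2 := by decide
private lemma c4_2 : ∀ q ∈ pw2, ∀ t ∈ t2, mulT q t ∈ pw2 := by decide
private lemma c5_2 : ∀ p < 31, ∀ r < 31, revP rm2 p r = true →
    ∀ q ∈ pw2, valT p r q ∈ t3 := by decide

private lemma idem3 : ∀ m ∈ t3, el m * el m = el m := by decide

private lemma el_pow (y : ℕ) (hy : y < 31) :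
    ∀ k, el y ^ (k + 1) = el ((fun w => mulT w y)^[k] y) ∧ (fun w => mulT w y)^[k] y < 31 := by
  intro k
  induction k with
  | zero => exact ⟨by simp [pow_one], by simpa using hy⟩
  | succ k ih =>
    rw [Function.iterate_succ_apply']
    exact ⟨by rw [pow_succ, ih.1, hel _ ih.2 _ hy], mulT_lt _ ih.2 _ hy⟩

private lemma val_mat {p r q : ℕ} (hp : p < 31) (hr : r < 31) (hq : q < 31) :
    el p * el q * (el r * el q) ^ 11 = el (valT p r q) := by
  have hrq : mulT r q < 31 := mulT_lt _ hr _ hq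
  have h11 := el_pow (mulT r q) hrq 10
  rw [hel r hr q hq, show (11 : ℕ) = 10 + 1 from rfl, h11.1, hel p hp q hq,
      hel _ (mulT_lt _ hp _ hq) _ h11.2]
  rfl

private lemma rev_mem (T m : List ℕ) (hT : ∀ i ∈ T, i < 31)
    (h1 : ∀ a ∈ T, ∀ b ∈ T, revP m (mulT a b) (mulT b a) = true)
    (h2 : ∀ p < 31, ∀ r < 31, revP m p r = true →
      ∀ t ∈ T, revP m (mulT p t) (mulT t r) = true)
    (a : ℕ → M33) (ha : ∀ i, ∃ k ∈ T, a i = el k) :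
    ∀ n, 2 ≤ n → ∃ p r, p < 31 ∧ r < 31 ∧ revP m p r = true ∧
      ((List.range n).map a).prod = el p ∧ (((List.range n).reverse).map a).prod = el r := by
  intro n hn
  induction n, hn using Nat.le_induction with
  | base =>
    obtain ⟨k0, hk0, e0⟩ := ha 0
    obtain ⟨k1, hk1, e1⟩ := ha 1
    have hb0 := hT _ hk0
    have hb1 := hT _ hk1
    refine ⟨mulT k0 k1, mulT k1 k0, mulT_lt _ hb0 _ hb1, mulT_lt _ hb1 _ hb0,
      h1 _ hk0 _ hk1, ?_, ?_⟩
    · have h2' : List.range 2 = [0, 1] := rfl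
      rw [h2']
      simp only [List.map_cons, List.map_nil, List.prod_cons, List.prod_nil, mul_one, e0, e1]
      exact hel _ hb0 _ hb1
    · have h2' : (List.range 2).reverse = [1, 0] := rfl
      rw [h2']
      simp only [List.map_cons, List.map_nil, List.prod_cons, List.prod_nil, mul_one, e0, e1]
      exact hel _ hb1 _ hb0
  | succ n hn ih =>
    obtain ⟨p, r, hp, hr, hrev, ep, er⟩ := ih
    obtain ⟨k, hk, ek⟩ := ha n
    have hb := hT _ hk
    refine ⟨mulT p k, mulT k r, mulT_lt _ hp _ hb, mulT_lt _ hb _ hr,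
      h2 _ hp _ hr hrev _ hk, ?_, ?_⟩
    · rw [List.range_succ, List.map_append, List.prod_append, ep]
      simp only [List.map_cons, List.map_nil, List.prod_cons, List.prod_nil, mul_one, ek]
      exact hel _ hp _ hb
    · rw [List.range_succ, List.reverse_append, List.reverse_singleton, List.singleton_append,
        List.map_cons, List.prod_cons, er, ek]
      exact hel _ hb _ hr

private lemma pw_mem (T P : List ℕ) (hT : ∀ i ∈ T, i < 31) (hP : ∀ i ∈ P, i < 31)
    (h3 : ∀ a ∈ T, ∀ b ∈ T, mulT a b ∈ P)
    (h4 : ∀ q ∈ P, ∀ t ∈ T, mulT q t ∈ P)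
    (a : ℕ → M33) (ha : ∀ i, ∃ k ∈ T, a i = el k) (s : ℕ) :
    ∀ n, 2 ≤ n → ∃ q ∈ P, ((List.range' s n).map a).prod = el q := by
  intro n hn
  induction n, hn using Nat.le_induction with
  | base =>
    obtain ⟨k0, hk0, e0⟩ := ha s
    obtain ⟨k1, hk1, e1⟩ := ha (s + 1)
    refine ⟨mulT k0 k1, h3 _ hk0 _ hk1, ?_⟩
    have h2' : List.range' s 2 = [s, s + 1] := rfl
    rw [h2']
    simp only [List.map_cons, List.map_nil, List.prod_cons, List.prod_nil, mul_one, e0, e1]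
    exact hel _ (hT _ hk0) _ (hT _ hk1)
  | succ n hn ih =>
    obtain ⟨q, hq, eq0⟩ := ih
    obtain ⟨k, hk, ek⟩ := ha (s + n)
    refine ⟨mulT q k, h4 _ hq _ hk, ?_⟩
    have hc : List.range' s (n + 1) = List.range' s n ++ [s + n] := by
      simpa using (List.range'_concat (step := 1) : List.range' s (n + 1) = List.range' s n ++ [s + 1 * n])
    rw [hc, List.map_append, List.prod_append, eq0]
    simp only [List.map_cons, List.map_nil, List.prod_cons, List.prod_nil, mul_one, ek]
    exact hel _ (hP _ hq) _ (hT _ hk)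

private lemma u_lem (T m P T' : List ℕ) (hT : ∀ i ∈ T, i < 31) (hP : ∀ i ∈ P, i < 31)
    (h1 : ∀ a ∈ T, ∀ b ∈ T, revP m (mulT a b) (mulT b a) = true)
    (h2 : ∀ p < 31, ∀ r < 31, revP m p r = true →
      ∀ t ∈ T, revP m (mulT p t) (mulT t r) = true)
    (h3 : ∀ a ∈ T, ∀ b ∈ T, mulT a b ∈ P)
    (h4 : ∀ q ∈ P, ∀ t ∈ T, mulT q t ∈ P)
    (h5 : ∀ p < 31, ∀ r < 31, revP m p r = true → ∀ q ∈ P, valT p r q ∈ T')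
    (n : ℕ) (hn : 2 ≤ n) (a : ℕ → M33) (ha : ∀ i, ∃ k ∈ T, a i = el k) :
    ∃ w ∈ T', ((uWord n n 6).map a).prod = el w := by
  obtain ⟨p, r, hp, hr, hrev, ep, er⟩ := rev_mem T m hT h1 h2 a ha n hn
  obtain ⟨q, hq, eq0⟩ := pw_mem T P hT hP h3 h4 a ha n n hn
  refine ⟨valT p r q, h5 _ hp _ hr hrev _ hq, ?_⟩
  have hql : q < 31 := hP _ hq
  have e1 : ((List.range (n + n)).map a).prod = el p * el q := by
    rw [List.range_add, ← List.range'_eq_map_range, List.map_append, List.prod_append, ep, eq0]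
  have e2 : (((List.range n).reverse ++ List.range' n n).map a).prod = el r * el q := by
    rw [List.map_append, List.prod_append, er, eq0]
  have e3 : (((List.replicate (2 * 6 - 1) ((List.range n).reverse ++ List.range' n n)).flatten).map a).prod
      = (el r * el q) ^ 11 := by
    rw [List.map_flatten, List.map_replicate, List.prod_flatten, List.map_replicate,
      List.prod_replicate, e2]
  rw [uWord, List.map_append, List.prod_append, e1, e3]
  exact val_mat hp hr hql

private lemma v_one (n : ℕ) (hn : 2 ≤ n) (ρ : List ℕ → M33)
    (hρ : ∀ v, ∃ k ∈ t0, ρ v = el k) :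
    ∃ w ∈ t1, ((vWord n 6 1).map ρ).prod = el w := by
  have : (vWord n 6 1).map ρ = (uWord n n 6).map (fun i => ρ [i]) := by
    rw [vWord, List.map_map]; rfl
  rw [this]
  exact u_lem t0 rm0 pw0 t1 ht0 hpw0 c1_0 c2_0 c3_0 c4_0 c5_0 n hn _ (fun i => hρ [i])

private lemma v_step (n : ℕ) (hn : 2 ≤ n) (h : ℕ) (T m P T' : List ℕ)
    (hT : ∀ i ∈ T, i < 31) (hP : ∀ i ∈ P, i < 31)
    (h1 : ∀ a ∈ T, ∀ b ∈ T, revP m (mulT a b) (mulT b a) = true)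
    (h2 : ∀ p < 31, ∀ r < 31, revP m p r = true →
      ∀ t ∈ T, revP m (mulT p t) (mulT t r) = true)
    (h3 : ∀ a ∈ T, ∀ b ∈ T, mulT a b ∈ P)
    (h4 : ∀ q ∈ P, ∀ t ∈ T, mulT q t ∈ P)
    (h5 : ∀ p < 31, ∀ r < 31, revP m p r = true → ∀ q ∈ P, valT p r q ∈ T')
    (prev : ∀ ρ : List ℕ → M33, (∀ v, ∃ k ∈ t0, ρ v = el k) →
      ∃ w ∈ T, ((vWord n 6 (h + 1)).map ρ).prod = el w)
    (ρ : List ℕ → M33) (hρ : ∀ v, ∃ k ∈ t0, ρ v = el k) :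
    ∃ w ∈ T', ((vWord n 6 (h + 2)).map ρ).prod = el w := by
  have key : ((vWord n 6 (h + 2)).map ρ).prod
      = ((uWord n n 6).map
          (fun j => ((vWord n 6 (h + 1)).map (fun xs => ρ (xs ++ [j]))).prod)).prod := by
    rw [vWord, List.map_flatMap]
    simp only [List.flatMap_def, List.prod_flatten, List.map_map]
    rfl
  rw [key]
  exact u_lem T m P T' hT hP h1 h2 h3 h4 h5 n hn _
    (fun j => prev (fun xs => ρ (xs ++ [j])) (fun v => hρ (v ++ [j])))

private lemma v_three (n : ℕ) (hn : 2 ≤ n) (ρ : List ℕ → M33)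
    (hρ : ∀ v, ∃ k ∈ t0, ρ v = el k) :
    ∃ w ∈ t3, ((vWord n 6 3).map ρ).prod = el w := by
  have v2 : ∀ ρ : List ℕ → M33, (∀ v, ∃ k ∈ t0, ρ v = el k) →
      ∃ w ∈ t2, ((vWord n 6 2).map ρ).prod = el w := fun ρ hρ =>
    v_step n hn 0 t1 rm1 pw1 t2 ht1 hpw1 c1_1 c2_1 c3_1 c4_1 c5_1
      (fun ρ' hρ' => v_one n hn ρ' hρ') ρ hρ
  exact v_step n hn 1 t2 rm2 pw2 t3 ht2 hpw2 c1_2 c2_2 c3_2 c4_2 c5_2 v2 ρ hρ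

private lemma foldl_eq (ρ : List ℕ → M33) (x : M33) (l : List (List ℕ)) :
    l.foldl (fun s i => s * ρ i) x = x * (l.map ρ).prod := by
  induction l generalizing x with
  | nil => simp
  | cons b l ih => simp only [List.foldl_cons, ih (x * ρ b), List.map_cons, List.prod_cons,
      mul_assoc]

private lemma wEval_eq (ρ : List ℕ → M33) (l : List (List ℕ)) (h : l ≠ []) :
    wEval (· * ·) ρ l = some ((l.map ρ).prod) := by
  cases l with
  | nil => exact absurd rfl h
  | cons a l =>
    show some (l.foldl (fun s i => s * ρ i) (ρ a)) = _
    rw [foldl_eq, List.map_cons, List.prod_cons]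

private lemma uWord_ne (n : ℕ) (hn : 2 ≤ n) : uWord n n 6 ≠ [] := by
  rw [uWord]
  intro h
  have h1 := (List.append_eq_nil_iff.mp h).1
  rw [List.range_eq_nil] at h1
  omega

private lemma vWord_ne (n : ℕ) (hn : 2 ≤ n) : ∀ h : ℕ, vWord n 6 (h + 1) ≠ [] := by
  intro h
  induction h with
  | zero =>
    rw [vWord]
    intro hc
    exact uWord_ne n hn (List.map_eq_nil_iff.mp hc)
  | succ h ih =>
    show vWord n 6 (h + 2) ≠ []
    rw [vWord]
    intro hc
    rw [List.flatMap_eq_nil_iff] at hc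
    obtain ⟨x, hx⟩ := List.exists_mem_of_ne_nil _ (uWord_ne n hn)
    exact ih (List.map_eq_nil_iff.mp (hc x hx))

private instance decM (A : M33) (i : Fin 3) (c : ℕ) : DecidablePred (fun j : Fin 3 => A i j = c) :=
  fun _ => inferInstance

private def mof (b : Fin 3 → Fin 3 → Bool) : M33 :=
  Matrix.of fun i j => if b i j then 1 else 0

private lemma mem_R3'_iff (A : M33) :
    A ∈ R3' ↔ ((∀ i j, A i j = 0 ∨ A i j = 1) ∧
      (∀ i j k, A i j = 1 → A i k = 1 → j = k) ∧
      (∀ i j k, A i k = 1 → A j k = 1 → i = j)) ∧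
      ¬(A = Matrix.of ![![0, 1, 0], ![1, 0, 0], ![0, 0, 1]] ∨
        A = Matrix.of ![![0, 0, 1], ![0, 1, 0], ![1, 0, 0]] ∨
        A = Matrix.of ![![1, 0, 0], ![0, 0, 1], ![0, 1, 0]]) :=
  Iff.rfl

private lemma classify_aux : ∀ b : Fin 3 → Fin 3 → Bool,
    (((∀ i j, mof b i j = 0 ∨ mof b i j = 1) ∧
      (∀ i j k, mof b i j = 1 → mof b i k = 1 → j = k) ∧
      (∀ i j k, mof b i k = 1 → mof b j k = 1 → i = j)) ∧
      ¬(mof b = Matrix.of ![![0, 1, 0], ![1, 0, 0], ![0, 0, 1]] ∨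
        mof b = Matrix.of ![![0, 0, 1], ![0, 1, 0], ![1, 0, 0]] ∨
        mof b = Matrix.of ![![1, 0, 0], ![0, 0, 1], ![0, 1, 0]])) →
      ∃ i ∈ t0, mof b = el i := by
  set_option maxRecDepth 10000 in decide

private lemma classify (A : M33) (hA : A ∈ R3') : ∃ i ∈ t0, A = el i := by
  rw [mem_R3'_iff] at hA
  have hb : A = mof (fun i j => A i j == 1) := by
    ext i j
    rcases hA.1.1 i j with h | h <;> simp [mof, h]
  rw [hb] at hA ⊢
  exact classify_aux _ hA

private lemma el_mem : ∀ i ∈ t0, el i ∈ R3' := by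
  have H : ∀ i ∈ t0, (((∀ a b, el i a b = 0 ∨ el i a b = 1) ∧
      (∀ a b c, el i a b = 1 → el i a c = 1 → b = c) ∧
      (∀ a b c, el i a c = 1 → el i b c = 1 → a = b)) ∧
      ¬(el i = Matrix.of ![![0, 1, 0], ![1, 0, 0], ![0, 0, 1]] ∨
        el i = Matrix.of ![![0, 0, 1], ![0, 1, 0], ![1, 0, 0]] ∨
        el i = Matrix.of ![![1, 0, 0], ![0, 0, 1], ![0, 1, 0]])) := by decide
  intro i hi
  rw [mem_R3'_iff]
  exact H i hi

private lemma el_transpose : ∀ i ∈ t0,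
    (el i).transpose = el (tT.getD i 0) ∧ tT.getD i 0 ∈ t0 := by decide

private lemma inv_laws : ∀ i ∈ t0,
    el i * (el i).transpose * el i = el i ∧
    (el i).transpose * el i * (el i).transpose = (el i).transpose := by decide

/-- `R₃'` is closed under multiplication and under transposition (so it is an
inverse subsemigroup of `R₃`), and for every `n ≥ 2` it satisfies the semigroup identity
`v_{n,6}^{(3)} ≈ (v_{n,6}^{(3)})²`. -/
theorem R3'_closed_and_satisfies_v_identity :
    (∀ A ∈ R3', ∀ B ∈ R3', A * B ∈ R3') ∧
    (∀ A ∈ R3', A.transpose ∈ R3') ∧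
    (∀ A ∈ R3', A * A.transpose * A = A ∧ A.transpose * A * A.transpose = A.transpose) ∧
    ∀ n, 2 ≤ n → ∀ ρ : List ℕ → Matrix (Fin 3) (Fin 3) ℕ, (∀ v, ρ v ∈ R3') →
      wEval (· * ·) ρ (vWord n 6 3) = wEval (· * ·) ρ (vWord n 6 3 ++ vWord n 6 3) := by
  refine ⟨?_, ?_, ?_, ?_⟩
  · intro A hA B hB
    obtain ⟨i, hi, rfl⟩ := classify A hA
    obtain ⟨j, hj, rfl⟩ := classify B hB
    rw [hel i (ht0 i hi) j (ht0 j hj)]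
    exact el_mem _ (List.mem_range.mpr (mulT_lt _ (ht0 i hi) _ (ht0 j hj)))
  · intro A hA
    obtain ⟨i, hi, rfl⟩ := classify A hA
    rw [(el_transpose i hi).1]
    exact el_mem _ (el_transpose i hi).2
  · intro A hA
    obtain ⟨i, hi, rfl⟩ := classify A hA
    exact inv_laws i hi
  · intro n hn ρ hρ
    obtain ⟨w, hw, hprod⟩ := v_three n hn ρ (fun v => classify _ (hρ v))
    have hne : vWord n 6 3 ≠ [] := vWord_ne n hn 2
    have hne2 : vWord n 6 3 ++ vWord n 6 3 ≠ [] := fun hc => hne (List.append_eq_nil_iff.mp hc).1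
    rw [wEval_eq ρ _ hne, wEval_eq ρ _ hne2, List.map_append, List.prod_append, hprod,
      idem3 w hw]
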